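/- arXiv:2001.00618 — 5 statements merged into one kernel-verified Lean document; each statement's English description precedes it below -/
import Mathlib

section
/- Let K be a field of characteristic different from 2, and let v be a discrete valuation on K with value group ℤ whose residue field is nonreal (i.e., -1 is a sum of squares in the residue field). Then there exists an element a in K that is a nonzero sum of squares in K with v(a) = 1. -/
/-!
Write `x = ((x + 1) / 2) ^ 2 - ((x - 1) / 2) ^ 2` for a uniformizer `x`. Replacing `-1` by a sum of
squares `B` with `v (1 + B) < v 4 * v x` changes the right-hand side by an error of valuation
`< v x`, so the resulting sum of squares is still a uniformizer. Such a `B` exists: if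
`v 2 < 1` take `B = 15`, since `1 + 15 = 2 ^ 4`; otherwise lift the relation `-1 = Σ aᵢ²` from the
residue field to a sum of squares `A` with `v (1 + A) < 1`, and one Newton step
`B = A * ((A - 1) / (2 * A)) ^ 2`, for which `1 + B = (1 + A) ^ 2 / (4 * A)`, squares the error.
-/

open WithZero

theorem IsSumSq.map {R S F : Type*} [NonUnitalNonAssocSemiring R] [NonUnitalNonAssocSemiring S]
    [FunLike F R S] [NonUnitalRingHomClass F R S] (f : F) {x : R} (hx : IsSumSq x) :
    IsSumSq (f x) := by
  induction hx with
  | zero => simp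
  | sq_add a _ ih => simpa using IsSumSq.sq_add (f a) ih

theorem IsSumSq.exists_preimage_of_surjective {R S F : Type*} [NonUnitalNonAssocSemiring R]
    [NonUnitalNonAssocSemiring S] [FunLike F R S] [NonUnitalRingHomClass F R S] {f : F}
    (hf : Function.Surjective f) {y : S} (hy : IsSumSq y) : ∃ x, IsSumSq x ∧ f x = y := by
  induction hy with
  | zero => exact ⟨0, .zero, map_zero f⟩
  | sq_add a _ ih =>
    obtain ⟨x, hx, rfl⟩ := ih
    obtain ⟨b, rfl⟩ := hf a
    exact ⟨b * b + x, .sq_add b hx, by simp⟩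

theorem WithZero.sq_lt_exp_neg_one_of_lt_one {x : ℤᵐ⁰} (hx : x < 1) : x ^ 2 < exp (-1) := by
  have hle : x ≤ exp (-1) := by
    rwa [← lt_mul_exp_iff_le exp_ne_zero, ← exp_add, neg_add_cancel, exp_zero]
  calc x ^ 2 ≤ exp (-1) ^ 2 := pow_le_pow_left₀ zero_le hle 2
    _ < exp (-1) := by rw [← exp_nsmul, exp_lt_exp]; norm_num

namespace Valuation

section General

variable {K Γ₀ : Type*} [Field K] [LinearOrderedCommGroupWithZero Γ₀] (v : Valuation K Γ₀)

theorem exists_isSumSq_valuation_eq_one_and_one_add_lt_one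
    (hres : IsSumSq (-1 : IsLocalRing.ResidueField v.valuationSubring)) :
    ∃ A : K, IsSumSq A ∧ v A = 1 ∧ v (1 + A) < 1 := by
  obtain ⟨A, hA, hAres⟩ := hres.exists_preimage_of_surjective IsLocalRing.residue_surjective
  refine ⟨A, hA.map v.valuationSubring.subtype, le_antisymm A.2 ?_, ?_⟩
  · rw [← not_lt, ← mem_maximalIdeal_iff, ← IsLocalRing.residue_eq_zero_iff, hAres]
    exact neg_ne_zero.2 one_ne_zero
  · have : (1 + A : v.valuationSubring) ∈ IsLocalRing.maximalIdeal v.valuationSubring := by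
      rw [← IsLocalRing.residue_eq_zero_iff, map_add, map_one, hAres, add_neg_cancel]
    simpa using v.mem_maximalIdeal_iff.1 this

theorem exists_isSumSq_valuation_one_add_eq_sq (h2 : (2 : K) ≠ 0) (hv2 : v 2 = 1) {A : K}
    (hA : IsSumSq A) (hvA : v A = 1) : ∃ B, IsSumSq B ∧ v (1 + B) = v (1 + A) ^ 2 := by
  have hA0 : A ≠ 0 := v.ne_zero_iff.1 (by simp [hvA])
  refine ⟨A * ((A - 1) / (2 * A)) ^ 2, hA.mul (IsSquare.sq _).isSumSq, ?_⟩
  have : 1 + A * ((A - 1) / (2 * A)) ^ 2 = (1 + A) ^ 2 / (2 ^ 2 * A) := by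
    field_simp
    ring
  simp [this, hv2, hvA]

theorem exists_isSumSq_valuation_eq_of_valuation_one_add_lt (h2 : (2 : K) ≠ 0) {x B : K}
    (hx : v x < 1) (hB : IsSumSq B) (hB1 : v (1 + B) < v 2 ^ 2 * v x) :
    ∃ a, IsSumSq a ∧ v a = v x := by
  refine ⟨((x + 1) / 2) ^ 2 + B * ((x - 1) / 2) ^ 2,
    (IsSquare.sq _).isSumSq.add (hB.mul (IsSquare.sq _).isSumSq), ?_⟩
  have hsplit :
      ((x + 1) / 2) ^ 2 + B * ((x - 1) / 2) ^ 2 = x + (1 + B) * (x - 1) ^ 2 / 2 ^ 2 := by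
    field_simp
    ring
  have hx1 : v (x - 1) = 1 := by rw [v.map_sub_eq_of_lt_right (by simpa using hx), map_one]
  have htail : v ((1 + B) * (x - 1) ^ 2 / 2 ^ 2) < v x := by
    rwa [map_div₀, map_mul, map_pow, map_pow, hx1, one_pow, mul_one,
      div_lt_iff₀ (pow_pos (v.pos_iff.2 h2) 2), mul_comm]
  rw [hsplit, v.map_add_eq_of_lt_left htail]

end General

section Discrete

variable {K : Type*} [Field K] (v : Valuation K ℤᵐ⁰)

theorem exists_isSumSq_valuation_one_add_lt (h2 : (2 : K) ≠ 0)
    (hres : IsSumSq (-1 : IsLocalRing.ResidueField v.valuationSubring)) :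
    ∃ B, IsSumSq B ∧ v (1 + B) < v 2 ^ 2 * exp (-1) := by
  have hv2 : v 2 ≤ 1 := by
    rw [← one_add_one_eq_two]
    exact v.map_add_le v.map_one.le v.map_one.le
  rcases hv2.lt_or_eq with hv2 | hv2
  · refine ⟨15, IsSumSq.natCast 15, ?_⟩
    have hv16 : v (1 + 15) = v 2 ^ 2 * v 2 ^ 2 := by rw [← map_pow, ← map_mul]; norm_num
    rw [hv16]
    exact mul_lt_mul_of_pos_left (sq_lt_exp_neg_one_of_lt_one hv2) (pow_pos (v.pos_iff.2 h2) 2)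
  · obtain ⟨A, hA, hvA, hvA1⟩ := v.exists_isSumSq_valuation_eq_one_and_one_add_lt_one hres
    obtain ⟨B, hB, hvB⟩ := v.exists_isSumSq_valuation_one_add_eq_sq h2 hv2 hA hvA
    refine ⟨B, hB, ?_⟩
    rw [hvB, hv2, one_pow, one_mul]
    exact sq_lt_exp_neg_one_of_lt_one hvA1

end Discrete

end Valuation

/-- If `K` is a field of characteristic ≠ 2 and `v` is a discrete valuation on `K`
with value group `ℤ` (i.e. surjective onto `ℤₘ₀`) whose residue field is nonreal, then there is
a nonzero sum of squares `a` in `K` with `v a = 1` (i.e. `a` is a uniformizer, written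
multiplicatively as `v a = ofAdd (-1)`). -/
theorem stmt_0 (K : Type) [Field K] (hchar : ringChar K ≠ 2)
    (v : Valuation K (WithZero (Multiplicative ℤ))) (hsurj : Function.Surjective v)
    (hres : IsSumSq (-1 : IsLocalRing.ResidueField v.valuationSubring)) :
    ∃ a : K, IsSumSq a ∧ a ≠ 0 ∧
      v a = ((Multiplicative.ofAdd (-1 : ℤ) : Multiplicative ℤ) :
        WithZero (Multiplicative ℤ)) := by
  rw [← exp_eq_coe_ofAdd]
  have h2 : (2 : K) ≠ 0 := Ring.two_ne_zero hchar
  obtain ⟨π, hπ⟩ := hsurj (exp (-1))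
  obtain ⟨B, hB, hvB⟩ := v.exists_isSumSq_valuation_one_add_lt h2 hres
  obtain ⟨a, ha, hva⟩ := v.exists_isSumSq_valuation_eq_of_valuation_one_add_lt h2
    (x := π) (by rw [hπ, ← exp_zero, exp_lt_exp]; norm_num) hB (by rwa [hπ])
  exact ⟨a, ha, v.ne_zero_iff.1 (by simp [hva, hπ]), hva.trans hπ⟩
end

section
/- Let K be a field of characteristic different from 2, and let v₁,…,vₙ be finitely many distinct discrete valuations on K, each with value group ℤ and each with nonreal residue field. Then the group homomorphism τ from the multiplicative group of nonzero sums of squares of K to ℤⁿ given by σ ↦ (v₁(σ),…,vₙ(σ)) is surjective. -/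
/-!
Nonzero sums of squares form a group under multiplication, so the value vectors
`(log vᵢ(σ))ᵢ` they realise form a subgroup of `ℤⁿ`. By the approximation theorem every
`2c` is the value vector of a square, so it suffices to find, for each `i`, a sum of squares
whose value is odd at `vᵢ` and even at every other `vⱼ`.

For this, start from a sum of squares `R` with `vᵢ(2 + R) < vᵢ(2)²`: if the residue
characteristic is `2` take `R = 6`, otherwise lift `-2 = (-1) + (-1)`, a sum of squares in the
nonreal residue field. One Newton step for `X² + 1 + R` turns `1 + x² + R` into an exact square,
and a suitable perturbation of `x` then has the required parities.
-/

open WithZero Filter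

namespace WithZero

lemma exp_neg_one_lt_one : exp (-1 : ℤ) < 1 := by
  rw [← exp_zero, exp_lt_exp]
  norm_num

lemma exp_pow (a : ℤ) (n : ℕ) : exp a ^ n = exp (n * a) := by
  rw [← exp_nsmul, nsmul_eq_mul]

lemma le_exp_sub_one_of_lt_exp {x : ℤᵐ⁰} {a : ℤ} (h : x < exp a) : x ≤ exp (a - 1) := by
  rwa [← lt_mul_exp_iff_le exp_ne_zero, ← exp_add, sub_add_cancel]

lemma lt_exp_log_add_one (x : ℤᵐ⁰) : x < exp (log x + 1) :=
  lt_exp_of_log_lt (lt_add_one _)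

lemma eventually_pow_mul_lt {α β γ : ℤᵐ⁰} (hα : α < 1) (hγ : γ ≠ 0) :
    ∀ᶠ r : ℕ in atTop, α ^ r * β < γ := by
  obtain rfl | hα0 := eq_or_ne α 0
  · filter_upwards [eventually_gt_atTop 0] with r hr
    simpa [zero_pow hr.ne'] using zero_lt_iff.mpr hγ
  obtain rfl | hβ0 := eq_or_ne β 0
  · exact .of_forall fun r ↦ by simpa using zero_lt_iff.mpr hγ
  lift α to ℤ using hα0 with a
  lift β to ℤ using hβ0 with b
  lift γ to ℤ using hγ with c
  rw [← exp_zero, exp_lt_exp] at hα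
  filter_upwards [eventually_gt_atTop (b - c).toNat] with r hr
  rw [← exp_nsmul, ← exp_add, exp_lt_exp, nsmul_eq_mul]
  have hbc : b - c < r := (Int.self_le_toNat _).trans_lt (by exact_mod_cast hr)
  nlinarith

lemma exists_pow_mul_lt {κ : Type*} [Finite κ] {α β γ : κ → ℤᵐ⁰}
    (hα : ∀ k, α k < 1) (hγ : ∀ k, γ k ≠ 0) :
    ∃ r ≠ 0, ∀ k, α k ^ r * β k < γ k :=
  ((eventually_ne_atTop 0).and
    (eventually_all.mpr fun k ↦ eventually_pow_mul_lt (hα k) (hγ k))).exists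

end WithZero

lemma IsSumSq.map_s1 {R S : Type*} [Semiring R] [Semiring S] (f : R →+* S) {a : R}
    (ha : IsSumSq a) : IsSumSq (f a) := by
  induction ha with
  | zero => simp
  | sq_add b _ ih => simpa using ih.sq_add (f b)

lemma IsSumSq.exists_preimage {R S : Type*} [Semiring R] [Semiring S] {f : R →+* S}
    (hf : Function.Surjective f) {b : S} (hb : IsSumSq b) : ∃ a, IsSumSq a ∧ f a = b := by
  induction hb with
  | zero => exact ⟨0, .zero, map_zero f⟩
  | sq_add c _ ih =>
    obtain ⟨a, ha, rfl⟩ := ih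
    obtain ⟨c, rfl⟩ := hf c
    exact ⟨c * c + a, ha.sq_add c, by simp⟩

lemma IsSumSq.inv {K : Type*} [Field K] {s : K} (hs : IsSumSq s) : IsSumSq s⁻¹ := by
  obtain rfl | hs0 := eq_or_ne s 0
  · simp
  rw [show s⁻¹ = s * (s⁻¹ * s⁻¹) by field_simp]
  exact hs.mul (.mul_self _)

namespace Valuation

section General

variable {R K Γ₀ : Type*} [Ring R] [Field K] [LinearOrderedCommGroupWithZero Γ₀]

lemma map_two_le_one (v : Valuation R Γ₀) : v 2 ≤ 1 := by
  simpa [one_add_one_eq_two] using v.map_add_le v.map_one.le v.map_one.le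

lemma map_add_add_eq_of_lt (v : Valuation R Γ₀) {a b c : R} (ha : v a < v b) (hc : v c < v b) :
    v (a + b + c) = v b := by
  have hab : v (a + b) = v b := v.map_add_eq_of_lt_right ha
  rw [v.map_add_eq_of_lt_left (hab ▸ hc), hab]

lemma map_pow_div_one_add_pow_of_one_lt (v : Valuation K Γ₀) {z : K} (hz : 1 < v z) {m : ℕ}
    (hm : m ≠ 0) : v (z ^ m / (1 + z ^ m)) = 1 := by
  have hzm : 1 < v (z ^ m) := by simpa using one_lt_pow₀ hz hm
  rw [map_div₀, v.map_add_eq_of_lt_right (by simpa using hzm),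
    div_self (zero_lt_one.trans hzm).ne']

lemma map_pow_div_one_add_pow_of_lt_one (v : Valuation K Γ₀) {z : K} (hz : v z < 1) {m : ℕ}
    (hm : m ≠ 0) : v (z ^ m / (1 + z ^ m)) = v z ^ m := by
  have hzm : v (z ^ m) < 1 := by simpa using pow_lt_one₀ zero_le hz hm
  rw [map_div₀, v.map_add_eq_of_lt_left (by simpa using hzm), map_one, div_one, map_pow]

end General

variable {K : Type*} [Field K]

lemma exists_eq_exp {v : Valuation K ℤᵐ⁰} {x : K} (hx : x ≠ 0) : ∃ a, v x = exp a :=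
  ⟨log (v x), (exp_log ((map_ne_zero v).mpr hx)).symm⟩

/-- A discrete valuation ring is a maximal proper subring of its fraction field. -/
theorem isEquiv_of_forall_le_one_imp {v w : Valuation K ℤᵐ⁰} (hw : Function.Surjective w)
    (h : ∀ x, v x ≤ 1 → w x ≤ 1) : v.IsEquiv w := by
  refine isEquiv_of_val_le_one fun t ↦ ⟨h t, fun hwt ↦ ?_⟩
  by_contra! hvt
  have ht0 : t ≠ 0 := by rintro rfl; simp at hvt
  have hwt1 : w t = 1 := le_antisymm hwt <| by
    have := h t⁻¹ (by simpa using inv_le_one_of_one_le₀ hvt.le)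
    rwa [map_inv₀, inv_le_one₀ (zero_lt_iff.mpr ((map_ne_zero w).mpr ht0))] at this
  obtain ⟨b, hb⟩ := exists_eq_exp (v := v) ht0
  rw [hb, ← exp_zero, exp_lt_exp] at hvt
  obtain ⟨y, hy⟩ := hw (exp 1)
  obtain ⟨a, ha⟩ := exists_eq_exp (v := v) ((map_ne_zero w).mp (hy ▸ exp_ne_zero))
  -- `w` is trivial on the powers of `t`, while they make `y` integral for `v`
  have := h (y * t⁻¹ ^ a.toNat) <| by
    rw [map_mul, map_pow, map_inv₀, ha, hb, ← exp_neg, ← exp_nsmul, ← exp_add, ← exp_zero,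
      exp_le_exp, nsmul_eq_mul]
    nlinarith [Int.self_le_toNat a]
  rw [map_mul, map_pow, map_inv₀, hy, hwt1, inv_one, one_pow, mul_one, ← exp_zero,
    exp_le_exp] at this
  omega

/-- Equivalent valuations send a uniformizer of one to a uniformizer of the other. -/
theorem eq_of_isEquiv {v w : Valuation K ℤᵐ⁰} (hv : Function.Surjective v)
    (hw : Function.Surjective w) (h : v.IsEquiv w) : v = w := by
  obtain ⟨π, hπ⟩ := hv (exp (-1))
  obtain ⟨ρ, hρ⟩ := hw (exp (-1))
  have hwπ : w π = exp (-1) := by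
    refine le_antisymm ?_ ?_
    · exact le_exp_sub_one_of_lt_exp (h.lt_one_iff_lt_one.mp (hπ ▸ exp_neg_one_lt_one))
    · have hvρ : v ρ ≤ v π :=
        hπ ▸ le_exp_sub_one_of_lt_exp (h.lt_one_iff_lt_one.mpr (hρ ▸ exp_neg_one_lt_one))
      simpa [hρ] using h.le_iff_le.mp hvρ
  ext x
  obtain rfl | hx0 := eq_or_ne x 0
  · simp
  obtain ⟨a, ha⟩ := exists_eq_exp (v := v) hx0
  have : v x = v (π ^ (-a)) := by rw [ha, map_zpow₀, hπ, ← exp_zsmul]; simp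
  rw [h.eq_iff.mp this, ha, map_zpow₀, hwπ, ← exp_zsmul]
  simp

lemma exists_le_one_and_one_lt_of_ne {v w : Valuation K ℤᵐ⁰} (hv : Function.Surjective v)
    (hw : Function.Surjective w) (hne : v ≠ w) : ∃ x, v x ≤ 1 ∧ 1 < w x := by
  by_contra! h
  exact hne (eq_of_isEquiv hv hw (isEquiv_of_forall_le_one_imp hw h))

lemma exists_one_lt_and_lt_one_of_ne {v w : Valuation K ℤᵐ⁰} (hv : Function.Surjective v)
    (hw : Function.Surjective w) (hne : v ≠ w) : ∃ x, 1 < v x ∧ w x < 1 := by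
  obtain ⟨s, hws, hvs⟩ := exists_le_one_and_one_lt_of_ne hw hv hne.symm
  obtain ⟨t, hvt, hwt⟩ := exists_le_one_and_one_lt_of_ne hv hw hne
  have ht0 : t ≠ 0 := by rintro rfl; simp at hwt
  refine ⟨s / t, ?_, ?_⟩
  · rw [map_div₀, one_lt_div₀ (zero_lt_iff.mpr ((map_ne_zero v).mpr ht0))]
    exact hvt.trans_lt hvs
  · rw [map_div₀, div_lt_one₀ (zero_lt_one.trans hwt)]
    exact hws.trans_lt hwt

lemma exists_isSumSq_map_two_add_lt (v : Valuation K ℤᵐ⁰) (h2 : (2 : K) ≠ 0)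
    (hres : IsSumSq (-1 : IsLocalRing.ResidueField v.valuationSubring)) :
    ∃ R : K, IsSumSq R ∧ v (2 + R) < v 2 ^ 2 := by
  rcases v.map_two_le_one.lt_or_eq with hlt | heq
  · refine ⟨(6 : ℕ), IsSumSq.natCast 6, ?_⟩
    rw [show (2 : K) + (6 : ℕ) = 2 ^ 3 by norm_num, map_pow]
    exact pow_lt_pow_right_of_lt_one₀ (zero_lt_iff.mpr ((map_ne_zero v).mpr h2)) hlt
      (by norm_num)
  · obtain ⟨R, hR, hRres⟩ := (hres.add hres).exists_preimage IsLocalRing.residue_surjective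
    refine ⟨R, hR.map_s1 v.valuationSubring.subtype, ?_⟩
    have hres0 : IsLocalRing.residue _ (2 + R) = 0 := by
      rw [map_add, hRres, map_ofNat]
      ring
    rw [heq, one_pow]
    exact v.isEquiv_valuation_valuationSubring.lt_one_iff_lt_one.mpr
      ((ValuationSubring.valuation_lt_one_iff _ _).mp
        ((IsLocalRing.residue_eq_zero_iff _).mp hres0))

end Valuation

open Valuation

section Approximation

variable {K ι : Type*} [Field K] {v : ι → Valuation K ℤᵐ⁰}

theorem exists_one_lt_and_forall_lt_one [Finite ι] (hv : Function.Injective v)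
    (hsurj : ∀ i, Function.Surjective (v i)) (i : ι) :
    ∃ z, 1 < v i z ∧ ∀ j ≠ i, v j z < 1 := by
  classical
  have := Fintype.ofFinite ι
  suffices h : ∀ S : Finset ι, ∃ z, 1 < v i z ∧ ∀ j ∈ S, j ≠ i → v j z < 1 by
    obtain ⟨z, hzi, hz⟩ := h Finset.univ
    exact ⟨z, hzi, fun j hj ↦ hz j (Finset.mem_univ j) hj⟩
  intro S
  induction S using Finset.induction_on with
  | empty =>
    obtain ⟨z, hz⟩ := hsurj i (exp 1)
    exact ⟨z, by simp [hz, ← exp_zero], by simp⟩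
  | insert a S _ ih =>
    obtain ⟨z, hzi, hzS⟩ := ih
    obtain rfl | hai := eq_or_ne a i
    · exact ⟨z, hzi, by simpa using hzS⟩
    obtain ⟨y, hyi, hya⟩ := exists_one_lt_and_lt_one_of_ne (hsurj i) (hsurj a) (hv.ne hai.symm)
    obtain ⟨r, hr0, hr⟩ := exists_pow_mul_lt (κ := {j // j ∈ S ∧ j ≠ i})
      (α := fun j ↦ v j z) (β := fun j ↦ v j y) (fun j ↦ hzS j j.2.1 j.2.2)
      fun _ ↦ one_ne_zero
    by_cases hza : v a z ≤ 1
    · refine ⟨z ^ r * y, ?_, fun j hj hji ↦ ?_⟩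
      · rw [map_mul, map_pow]
        exact Right.one_lt_mul' (one_lt_pow₀ hzi hr0) hyi
      rcases Finset.mem_insert.mp hj with rfl | hjS
      · rw [map_mul, map_pow]
        exact Right.mul_lt_one_of_le_of_lt (pow_le_one₀ zero_le hza) hya
      · simpa using hr ⟨j, hjS, hji⟩
    · refine ⟨z ^ r / (1 + z ^ r) * y, ?_, fun j hj hji ↦ ?_⟩
      · rwa [map_mul, map_pow_div_one_add_pow_of_one_lt _ hzi hr0, one_mul]
      rcases Finset.mem_insert.mp hj with rfl | hjS
      · rwa [map_mul, map_pow_div_one_add_pow_of_one_lt _ (not_le.mp hza) hr0, one_mul]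
      · rw [map_mul, map_pow_div_one_add_pow_of_lt_one _ (hzS j hjS hji) hr0]
        exact hr ⟨j, hjS, hji⟩

theorem exists_ne_zero_forall_eq_exp [Fintype ι] (hv : Function.Injective v)
    (hsurj : ∀ i, Function.Surjective (v i)) (c : ι → ℤ) :
    ∃ x ≠ 0, ∀ j, v j x = exp (c j) := by
  classical
  cases isEmpty_or_nonempty ι
  · exact ⟨1, one_ne_zero, isEmptyElim⟩
  choose z hzi hzj using exists_one_lt_and_forall_lt_one hv hsurj
  choose p hp using fun i ↦ hsurj i (exp (c i))
  obtain ⟨m, hm0, hm⟩ := exists_pow_mul_lt (κ := {ji : ι × ι // ji.2 ≠ ji.1})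
    (α := fun ji ↦ v ji.1.1 (z ji.1.2)) (β := fun ji ↦ v ji.1.1 (p ji.1.2))
    (γ := fun ji ↦ exp (c ji.1.1)) (fun ji ↦ hzj _ _ ji.2.symm) fun _ ↦ exp_ne_zero
  -- `z i ^ m / (1 + z i ^ m)` is a unit at `v i` and very small at the other `v j`
  have hx : ∀ j, v j (∑ i, z i ^ m / (1 + z i ^ m) * p i) = exp (c j) := by
    intro j
    have hjj : v j (z j ^ m / (1 + z j ^ m) * p j) = exp (c j) := by
      rw [map_mul, map_pow_div_one_add_pow_of_one_lt _ (hzi j) hm0, one_mul, hp]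
    rw [← Finset.add_sum_erase _ _ (Finset.mem_univ j), Valuation.map_add_eq_of_lt_left, hjj]
    refine hjj ▸ (v j).map_sum_lt exp_ne_zero fun i hi ↦ ?_
    have hij := (Finset.mem_erase.mp hi).1
    rw [map_mul, map_pow_div_one_add_pow_of_lt_one _ (hzj i j hij.symm) hm0]
    exact hm ⟨(j, i), hij⟩
  obtain ⟨j⟩ := ‹Nonempty ι›
  exact ⟨_, fun h ↦ exp_ne_zero ((hx j).symm.trans (by rw [h, map_zero])), hx⟩

/-- With `e = (2 + R) / 2` and `x = 1 - e` one has `1 + x ^ 2 + R = e ^ 2`. The sum of squares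
`1 + (x + δ) ^ 2 + R = e ^ 2 + 2 x δ + δ ^ 2` is dominated at `v i` by `2 x δ`, of odd exponent,
once `v i δ = v i 2 * exp (-1)`, and elsewhere by `δ ^ 2` once `δ` is large enough. -/
theorem exists_isSumSq_odd_log_at [Fintype ι] (hv : Function.Injective v)
    (hsurj : ∀ i, Function.Surjective (v i)) (h2 : (2 : K) ≠ 0) {i : ι} {R : K}
    (hR : IsSumSq R) (hRi : v i (2 + R) < v i 2 ^ 2) :
    ∃ s, IsSumSq s ∧ s ≠ 0 ∧ Odd (log (v i s)) ∧ ∀ j ≠ i, Even (log (v j s)) := by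
  classical
  obtain ⟨d, hd⟩ := exists_eq_exp (v := v i) h2
  set e := (2 + R) / 2
  set x := 1 - e
  obtain ⟨δ, -, hδ⟩ := exists_ne_zero_forall_eq_exp hv hsurj
    fun j ↦ if j = i then d - 1 else log (max (v j (2 * x)) (v j e)) + 1
  have hs : 1 + (x + δ) ^ 2 + R = e ^ 2 + 2 * x * δ + δ ^ 2 := by
    simp only [x, e]
    field_simp
    ring
  have hsi : v i (1 + (x + δ) ^ 2 + R) = exp (2 * d - 1) := by
    have hd0 : d ≤ 0 := by simpa [hd, ← exp_zero] using (v i).map_two_le_one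
    have hδi : v i δ = exp (d - 1) := by simpa using hδ i
    have hei : v i e ≤ exp (d - 1) := by
      rw [map_div₀, hd, div_le_iff₀ exp_pos, ← exp_add]
      refine le_exp_sub_one_of_lt_exp (a := 2 * d) (hRi.trans_eq ?_) |>.trans_eq ?_
      · rw [hd, exp_pow, Nat.cast_ofNat]
      · congr 1; ring
    have hxi : v i x = 1 :=
      map_one_sub_of_lt _ (hei.trans_lt (by rw [← exp_zero, exp_lt_exp]; omega))
    have hmid : v i (2 * x * δ) = exp (2 * d - 1) := by
      rw [map_mul, map_mul, hd, hxi, hδi, mul_one, ← exp_add]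
      ring_nf
    have hsmall : exp (2 * (d - 1)) < exp (2 * d - 1) := exp_lt_exp.mpr (by omega)
    rw [hs, map_add_add_eq_of_lt _ _ _, hmid]
    · rw [hmid, map_pow]
      refine lt_of_le_of_lt ?_ hsmall
      calc v i e ^ 2 ≤ exp (d - 1) ^ 2 := pow_le_pow_left₀ zero_le hei 2
        _ = exp (2 * (d - 1)) := by rw [exp_pow, Nat.cast_ofNat]
    · rwa [hmid, map_pow, hδi, exp_pow, Nat.cast_ofNat]
  have hsj : ∀ j ≠ i, v j (1 + (x + δ) ^ 2 + R) = v j δ ^ 2 := by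
    intro j hj
    have hδj : max (v j (2 * x)) (v j e) < v j δ := by
      rw [hδ j, if_neg hj]
      exact lt_exp_log_add_one _
    rw [hs, add_right_comm, map_add_add_eq_of_lt, map_pow]
    · rw [map_pow, map_pow]
      exact pow_lt_pow_left₀ (le_max_right _ _ |>.trans_lt hδj) zero_le two_ne_zero
    · rw [map_mul, map_pow, sq]
      exact mul_lt_mul_of_pos_right (le_max_left _ _ |>.trans_lt hδj) (zero_le.trans_lt hδj)
  refine ⟨1 + (x + δ) ^ 2 + R, ?_, fun h ↦ ?_, ?_, fun j hj ↦ ?_⟩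
  · rw [sq]
    exact (IsSumSq.one.add (.mul_self _)).add hR
  · rw [h, map_zero] at hsi
    exact exp_ne_zero hsi.symm
  · rw [hsi, log_exp]
    exact ⟨d - 1, by ring⟩
  · rw [hsj j hj, hδ j, ← exp_nsmul, log_exp]
    exact ⟨_, two_nsmul _⟩

end Approximation

section SumSqValues

variable {K ι : Type*} [Field K]

def sumSqValueSubgroup (v : ι → Valuation K ℤᵐ⁰) : AddSubgroup (ι → ℤ) where
  carrier := {c | ∃ σ : K, IsSumSq σ ∧ σ ≠ 0 ∧ ∀ j, v j σ = exp (c j)}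
  zero_mem' := ⟨1, .one, one_ne_zero, by simp⟩
  add_mem' := by
    rintro c c' ⟨σ, hσ, hσ0, hc⟩ ⟨σ', hσ', hσ'0, hc'⟩
    exact ⟨σ * σ', hσ.mul hσ', mul_ne_zero hσ0 hσ'0, by simp [hc, hc']⟩
  neg_mem' := by
    rintro c ⟨σ, hσ, hσ0, hc⟩
    exact ⟨σ⁻¹, hσ.inv, inv_ne_zero hσ0, by simp [hc]⟩

variable [Fintype ι] {v : ι → Valuation K ℤᵐ⁰} (hv : Function.Injective v)
  (hsurj : ∀ i, Function.Surjective (v i))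
include hv hsurj

lemma add_self_mem_sumSqValueSubgroup (c : ι → ℤ) : c + c ∈ sumSqValueSubgroup v := by
  obtain ⟨x, hx0, hx⟩ := exists_ne_zero_forall_eq_exp hv hsurj c
  exact ⟨x * x, .mul_self x, mul_ne_zero hx0 hx0, by simp [hx]⟩

lemma single_mem_sumSqValueSubgroup [DecidableEq ι] (h2 : (2 : K) ≠ 0)
    (hres : ∀ i, IsSumSq (-1 : IsLocalRing.ResidueField (v i).valuationSubring)) (i : ι) :
    Pi.single i 1 ∈ sumSqValueSubgroup v := by
  obtain ⟨R, hR, hRi⟩ := (v i).exists_isSumSq_map_two_add_lt h2 (hres i)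
  obtain ⟨s, hs, hs0, hodd, heven⟩ := exists_isSumSq_odd_log_at hv hsurj h2 hR hRi
  have hw : (fun j ↦ log (v j s)) ∈ sumSqValueSubgroup v :=
    ⟨s, hs, hs0, fun j ↦ (exp_log ((map_ne_zero _).mpr hs0)).symm⟩
  choose u hu using fun j ↦ show Even (log (v j s) - (Pi.single i 1 : ι → ℤ) j) by
    by_cases hj : j = i
    · subst hj
      simpa using hodd.sub_odd odd_one
    · simpa [hj] using heven j hj
  convert sub_mem hw (add_self_mem_sumSqValueSubgroup hv hsurj u) using 1
  ext j
  simp only [Pi.sub_apply, Pi.add_apply, ← hu j, sub_sub_cancel]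

lemma sumSqValueSubgroup_eq_top (h2 : (2 : K) ≠ 0)
    (hres : ∀ i, IsSumSq (-1 : IsLocalRing.ResidueField (v i).valuationSubring)) :
    sumSqValueSubgroup v = ⊤ := by
  classical
  refine eq_top_iff.mpr fun c _ ↦ ?_
  rw [← Finset.univ_sum_single c]
  refine sum_mem fun i _ ↦ ?_
  rw [← mul_one (c i), ← smul_eq_mul, Pi.single_smul']
  exact zsmul_mem (single_mem_sumSqValueSubgroup hv hsurj h2 hres i) _

end SumSqValues

/-- For finitely many distinct discrete (surjective ℤ-valued) valuations with
nonreal residue fields on a field `K` of characteristic ≠ 2, the map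
`σ ↦ (v₁ σ, …, vₙ σ)` from nonzero sums of squares to `ℤⁿ` is surjective. -/
theorem stmt_1 (K : Type) [Field K] (hchar : ringChar K ≠ 2) (n : ℕ)
    (v : Fin n → Valuation K (WithZero (Multiplicative ℤ)))
    (hdist : Function.Injective v)
    (hsurj : ∀ i, Function.Surjective (v i))
    (hres : ∀ i, IsSumSq (-1 : IsLocalRing.ResidueField (v i).valuationSubring)) :
    ∀ f : Fin n → ℤ, ∃ σ : K, IsSumSq σ ∧ σ ≠ 0 ∧
      ∀ i, v i σ = ((Multiplicative.ofAdd (-(f i)) : Multiplicative ℤ) :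
        WithZero (Multiplicative ℤ)) := by
  intro f
  obtain ⟨σ, hσ, hσ0, hval⟩ : -f ∈ sumSqValueSubgroup v := by
    rw [sumSqValueSubgroup_eq_top hdist hsurj (Ring.two_ne_zero hchar) hres]
    trivial
  exact ⟨σ, hσ, hσ0, hval⟩
end

section
/- Let E/F be a finite extension of fields of characteristic different from 2. If E is pythagorean, then F is pythagorean. -/
/-! If `u² + v² = d` is not a square in `K`, let `s ∈ E` be a square root of `d`. Then
`v² + (u + s)² = 2d + 2us` is not a square in `K(s)`: comparing the coefficients of `1, s` in
`(a + bs)² = 2d + 2us` gives `(a² - b²d)² = (2v)²d`, so `d` would be a square in `K`. As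
`[E : K(s)] < [E : K]`, induction on `[E : K]` shows that every sum of two squares in `K` is a
square; by induction on the number of summands, so is every sum of squares. -/

open IntermediateField Module

theorem forall_isSumSq_imp_isSquare_iff {R : Type*} [CommSemiring R] :
    (∀ a : R, IsSumSq a → IsSquare a) ↔ ∀ x y : R, IsSquare (x ^ 2 + y ^ 2) := by
  refine ⟨fun h x y ↦ h _ (by simpa [sq] using (IsSumSq.mul_self x).add (IsSumSq.mul_self y)),
    fun h a ha ↦ ?_⟩
  induction ha with
  | zero => exact ⟨0, by simp⟩
  | sq_add b _ ih =>
    obtain ⟨c, rfl⟩ := ih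
    simpa [sq] using h b c

section SquareRoot

variable {K L : Type*} [Field K] [Field L] [Algebra K L] {s : L} {d : K}

theorem mem_range_algebraMap_iff_isSquare (hs : s ^ 2 = algebraMap K L d) :
    s ∈ Set.range (algebraMap K L) ↔ IsSquare d := by
  constructor
  · rintro ⟨c, rfl⟩
    exact ⟨c, (algebraMap K L).injective (by simpa [sq] using hs.symm)⟩
  · rintro ⟨c, rfl⟩
    have : (s - algebraMap K L c) * (s + algebraMap K L c) = 0 := by
      rw [map_mul] at hs
      linear_combination hs
    rcases mul_eq_zero.mp this with h | h
    · exact ⟨c, (sub_eq_zero.mp h).symm⟩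
    · exact ⟨-c, by rw [map_neg]; exact (eq_neg_of_add_eq_zero_left h).symm⟩

open Polynomial in
theorem exists_eq_add_mul_of_mem_adjoin_simple (hs : s ^ 2 = algebraMap K L d) {z : L}
    (hz : z ∈ K⟮s⟯) : ∃ a b : K, z = algebraMap K L a + algebraMap K L b * s := by
  have hsalg : IsAlgebraic K s :=
    ⟨X ^ 2 - C d, X_pow_sub_C_ne_zero two_pos d, by simp [hs]⟩
  rw [← mem_toSubalgebra, adjoin_simple_toSubalgebra_of_isAlgebraic hsalg] at hz
  induction hz using Algebra.adjoin_induction with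
  | mem x hx => exact ⟨0, 1, by simp [Set.mem_singleton_iff.mp hx]⟩
  | algebraMap r => exact ⟨r, 0, by simp⟩
  | add x y _ _ hx hy =>
    obtain ⟨a, b, rfl⟩ := hx
    obtain ⟨a', b', rfl⟩ := hy
    exact ⟨a + a', b + b', by simp only [map_add]; ring⟩
  | mul x y _ _ hx hy =>
    obtain ⟨a, b, rfl⟩ := hx
    obtain ⟨a', b', rfl⟩ := hy
    refine ⟨a * a' + b * b' * d, a * b' + b * a', ?_⟩
    simp only [map_add, map_mul]
    linear_combination (algebraMap K L b * algebraMap K L b') * hs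

theorem eq_and_eq_of_add_mul_eq (hs : s ∉ Set.range (algebraMap K L)) {a b a' b' : K}
    (h : algebraMap K L a + algebraMap K L b * s = algebraMap K L a' + algebraMap K L b' * s) :
    a = a' ∧ b = b' := by
  obtain rfl : b = b' := by
    by_contra hb
    refine hs ⟨(a' - a) / (b - b'), ?_⟩
    have : algebraMap K L b - algebraMap K L b' ≠ 0 := by
      rw [← map_sub]; exact (map_ne_zero _).mpr (sub_ne_zero.mpr hb)
    rw [map_div₀, map_sub, map_sub, div_eq_iff this]
    linear_combination -h
  exact ⟨(algebraMap K L).injective (add_right_cancel h), rfl⟩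

theorem sq_ne_sq_add_sq_of_mem_adjoin_simple (h2 : (2 : K) ≠ 0) {u v : K}
    (hd : ¬IsSquare (u ^ 2 + v ^ 2)) (hs : s ^ 2 = algebraMap K L (u ^ 2 + v ^ 2))
    {w : L} (hw : w ∈ K⟮s⟯) : w ^ 2 ≠ algebraMap K L v ^ 2 + (algebraMap K L u + s) ^ 2 := by
  intro h
  have hsK : s ∉ Set.range (algebraMap K L) := (mem_range_algebraMap_iff_isSquare hs).not.mpr hd
  obtain ⟨a, b, rfl⟩ := exists_eq_add_mul_of_mem_adjoin_simple hs hw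
  -- `(a + bs)² = (a² + b²d) + 2ab·s` and `v² + (u + s)² = 2d + 2u·s`
  obtain ⟨h₁, h₂⟩ := eq_and_eq_of_add_mul_eq hsK (a := a ^ 2 + b ^ 2 * (u ^ 2 + v ^ 2))
    (b := 2 * a * b) (a' := 2 * (u ^ 2 + v ^ 2)) (b' := 2 * u) (by
      simp only [map_add, map_mul, map_pow, map_ofNat] at hs ⊢
      linear_combination h - (algebraMap K L b ^ 2 - 1) * hs)
  have key : (a ^ 2 - b ^ 2 * (u ^ 2 + v ^ 2)) ^ 2 = (2 * v) ^ 2 * (u ^ 2 + v ^ 2) := by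
    linear_combination (a ^ 2 + b ^ 2 * (u ^ 2 + v ^ 2) + 2 * (u ^ 2 + v ^ 2)) * h₁
      - (2 * a * b + 2 * u) * (u ^ 2 + v ^ 2) * h₂
  apply hd
  by_cases hv : v = 0
  · exact ⟨u, by simp [hv, sq]⟩
  · refine ⟨(a ^ 2 - b ^ 2 * (u ^ 2 + v ^ 2)) / (2 * v), ?_⟩
    field_simp
    linear_combination -key

end SquareRoot

universe u

theorem isSquare_sq_add_sq_of_finiteDimensional {K E : Type u} [Field K] [Field E] [Algebra K E]
    [FiniteDimensional K E] (h2 : (2 : K) ≠ 0) (hE : ∀ x y : E, IsSquare (x ^ 2 + y ^ 2))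
    (u v : K) : IsSquare (u ^ 2 + v ^ 2) := by
  induction hn : finrank K E using Nat.strong_induction_on generalizing K with
  | _ n ih =>
  by_contra hd
  obtain ⟨s, hs⟩ := hE (algebraMap K E u) (algebraMap K E v)
  have hs' : s ^ 2 = algebraMap K E (u ^ 2 + v ^ 2) := by simp [sq, ← hs]
  have hsK : s ∉ (⊥ : IntermediateField K E) :=
    mem_bot.not.mpr ((mem_range_algebraMap_iff_isSquare hs').not.mpr hd)
  have hlt : finrank K⟮s⟯ E < n := by
    rw [← hn, ← finrank_bot' (F := K)]
    exact finrank_lt_of_gt (bot_lt_iff_ne_bot.mpr (adjoin_simple_eq_bot_iff.not.mpr hsK))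
  have h2' : (2 : K⟮s⟯) ≠ 0 := fun h ↦
    h2 ((algebraMap K K⟮s⟯).injective (by rw [map_ofNat, map_zero, h]))
  obtain ⟨w, hw⟩ := ih _ hlt h2' (algebraMap K K⟮s⟯ v) ⟨algebraMap K E u + s,
    add_mem (IntermediateField.algebraMap_mem _ u) (mem_adjoin_simple_self K s)⟩ rfl
  exact sq_ne_sq_add_sq_of_mem_adjoin_simple h2 hd hs' w.2
    (by simpa [sq] using congrArg Subtype.val hw.symm)

/-- If `E/F` is a finite extension of fields of characteristic ≠ 2 and `E` is
pythagorean, then `F` is pythagorean. -/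
theorem stmt_3 (F E : Type) [Field F] [Field E] [Algebra F E] [FiniteDimensional F E]
    (hchar : ringChar F ≠ 2)
    (hE : ∀ a : E, IsSumSq a → IsSquare a) :
    ∀ a : F, IsSumSq a → IsSquare a := by
  rw [forall_isSumSq_imp_isSquare_iff] at hE ⊢
  exact isSquare_sq_add_sq_of_finiteDimensional (Ring.two_ne_zero hchar) hE
end

section
/- Let K/E be a proper finite extension of number fields. Then the set of sums of squares in K is not contained in E·K² (the set of products of an element of E with a square in K). -/
/-!
Pick a prime `v` of `E` with two distinct unramified primes `w₁ ≠ w₂` of `K` above it. Then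
`w_i(e y²) = v(e) + 2 w_i(y)` for `e ∈ E`, `y ∈ K`, so the `w₁`- and `w₂`-valuations of every
element of `E·K²` have the same parity. On the other hand `-1` is a sum of two squares in the
finite residue field of `w₁`; lifting such a representation and correcting it by a uniformizer
gives a sum of squares `a² + b² + 1` with `w₁`-valuation `1` and `w₂`-valuation `0`.

Such a `v` exists by Kummer–Dedekind. Let `x ∈ 𝓞 K` generate `K/E`, with minimal polynomial `F`
over `𝓞 E`. If `v` avoids the conductor of `𝓞 E[x]` and the resultant of `F` and `F'`, the primes
above `v` correspond to the irreducible factors of the separable polynomial `F mod v`; a root of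
`F mod v` and `deg F ≥ 2` give two distinct factors. A Schur-type norm argument produces such a
`v` at which `F` has a root.
-/

open IsDedekindDomain HeightOneSpectrum WithZero Polynomial UniqueFactorizationMonoid NumberField
  Ideal

theorem exists_sq_add_sq_add_one_eq_zero_of_finite (F : Type*) [CommRing F] [IsDomain F]
    [Finite F] : ∃ a b : F, a ≠ 0 ∧ a ^ 2 + b ^ 2 + 1 = 0 := by
  obtain ⟨p, _⟩ := CharP.exists F
  have : NeZero p := ⟨CharP.char_ne_zero_of_finite F p⟩
  obtain ⟨a, b, hab⟩ := CharP.sq_add_sq F p (-1)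
  push_cast at hab
  by_cases ha : (a : F) = 0
  · refine ⟨b, 0, fun hb => ?_, by linear_combination hab - (a : F) * ha⟩
    simp [ha, hb] at hab
  · exact ⟨a, b, ha, by linear_combination hab⟩

namespace IsDedekindDomain.HeightOneSpectrum

section

variable {S : Type*} [CommRing S] [IsDedekindDomain S]

theorem intValuation_eq_exp_neg_one_iff (v : HeightOneSpectrum S) {r : S} :
    v.intValuation r = exp (-1 : ℤ) ↔ r ∈ v.asIdeal ∧ r ∉ v.asIdeal ^ 2 := by
  have h1 := v.intValuation_le_pow_iff_mem r 1
  rw [pow_one] at h1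
  rw [← h1, ← intValuation_le_pow_iff_mem]
  rcases eq_or_ne (v.intValuation r) 0 with h | h
  · simpa [h] using exp_ne_zero.symm
  rw [← exp_log h, exp_inj, exp_le_exp, exp_le_exp]
  omega

theorem intValuation_eq_exp_neg_one_or_add_eq (v : HeightOneSpectrum S) {r d : S}
    (hr : r ∈ v.asIdeal) (hd : v.intValuation d = exp (-1 : ℤ)) :
    v.intValuation r = exp (-1 : ℤ) ∨ v.intValuation (r + d) = exp (-1 : ℤ) := by
  refine or_iff_not_imp_left.mpr fun h => ?_
  have hr₂ : v.intValuation r ≤ exp (-2 : ℤ) := by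
    have := (intValuation_eq_exp_neg_one_iff v).not.mp h
    exact (v.intValuation_le_pow_iff_mem r 2).mpr (by tauto)
  rw [Valuation.map_add_eq_of_lt_right _ (hr₂.trans_lt (by rw [hd, exp_lt_exp]; norm_num)), hd]

theorem exists_intValuation_sq_add_sq_add_one {v₁ v₂ : HeightOneSpectrum S} (hne : v₁ ≠ v₂)
    [Finite (S ⧸ v₁.asIdeal)] (h2 : (2 : S) ∉ v₁.asIdeal) :
    ∃ a b : S, v₁.intValuation (a ^ 2 + b ^ 2 + 1) = exp (-1 : ℤ) ∧
      v₂.intValuation (a ^ 2 + b ^ 2 + 1) = 1 := by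
  obtain ⟨α, β, hα, hαβ⟩ := exists_sq_add_sq_add_one_eq_zero_of_finite (S ⧸ v₁.asIdeal)
  obtain ⟨a, rfl⟩ := Ideal.Quotient.mk_surjective α
  obtain ⟨b, rfl⟩ := Ideal.Quotient.mk_surjective β
  obtain ⟨π, hπ⟩ := v₁.intValuation_exists_uniformizer
  have hπ₁ : Ideal.Quotient.mk v₁.asIdeal π = 0 :=
    Ideal.Quotient.eq_zero_iff_mem.mpr ((intValuation_eq_exp_neg_one_iff v₁).mp hπ).1
  obtain ⟨i, hi, j, hj, hij⟩ : ∃ i ∈ v₁.asIdeal, ∃ j ∈ v₂.asIdeal, i + j = 1 :=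
    Submodule.mem_sup.mp ((v₁.isMaximal.coprime_of_ne v₂.isMaximal
      fun h => hne (HeightOneSpectrum.ext h)) ▸ Submodule.mem_top)
  have hj₁ : Ideal.Quotient.mk v₁.asIdeal j = 1 := by
    rw [← sub_eq_zero, ← map_one (Ideal.Quotient.mk v₁.asIdeal), ← map_sub,
      Ideal.Quotient.eq_zero_iff_mem, ← hij]
    simpa using neg_mem hi
  -- `σ t ≡ α² + β² + 1 = 0 mod v₁` and `σ t ≡ 1 mod v₂`
  set σ : S → S := fun t => (j * (a + t * π)) ^ 2 + (j * b) ^ 2 + 1 with hσ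
  have hσ₁ : σ 0 ∈ v₁.asIdeal := by
    rw [← Ideal.Quotient.eq_zero_iff_mem]
    simp only [hσ, map_add, map_mul, map_pow, map_one, hj₁, hπ₁]
    linear_combination hαβ
  have hσ₂ (t : S) : v₂.intValuation (σ t) = 1 := by
    refine intValuation_eq_one_iff.mpr fun hmem => v₂.isPrime.ne_top ((eq_top_iff_one _).mpr ?_)
    have : σ t - 1 ∈ v₂.asIdeal := by
      rw [show σ t - 1 = j * (j * (a + t * π) ^ 2 + j * b ^ 2) by ring]
      exact mul_mem_right _ _ hj
    simpa using sub_mem hmem this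
  have hdiff : v₁.intValuation (j ^ 2 * π * (2 * a + π)) = exp (-1 : ℤ) := by
    have hj : v₁.intValuation j = 1 := intValuation_eq_one_iff.mpr fun hmem =>
      one_ne_zero (hj₁ ▸ Ideal.Quotient.eq_zero_iff_mem.mpr hmem)
    have h2a : v₁.intValuation (2 * a + π) = 1 := by
      refine intValuation_eq_one_iff.mpr fun hmem => ?_
      rw [← Ideal.Quotient.eq_zero_iff_mem, map_add, map_mul, hπ₁, add_zero] at hmem
      exact mul_ne_zero (mt Ideal.Quotient.eq_zero_iff_mem.mp h2) hα hmem
    rw [map_mul, map_mul, map_pow, hj, hπ, h2a, one_pow, one_mul, mul_one]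
  rcases intValuation_eq_exp_neg_one_or_add_eq v₁ hσ₁ hdiff with h | h
  · exact ⟨_, _, h, hσ₂ 0⟩
  · refine ⟨_, _, ?_, hσ₂ 1⟩
    rwa [show σ 0 + j ^ 2 * π * (2 * a + π) = σ 1 by simp only [hσ]; ring] at h

end

variable {A K : Type*} (L : Type*) {B : Type*}
  [CommRing A] [IsDedekindDomain A] [CommRing B] [IsDedekindDomain B] [Algebra A B]
  [Module.IsTorsionFree A B] [Field K] [Field L] [Algebra K L]
  [Algebra A K] [IsFractionRing A K] [Algebra A L] [IsScalarTower A K L]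
  [Algebra B L] [IsFractionRing B L] [IsScalarTower A B L]

theorem even_log_valuation_sub_log_valuation (v : HeightOneSpectrum A)
    (w₁ w₂ : HeightOneSpectrum B) [w₁.asIdeal.LiesOver v.asIdeal] [w₂.asIdeal.LiesOver v.asIdeal]
    (he : v.asIdeal.ramificationIdx' w₁.asIdeal = v.asIdeal.ramificationIdx' w₂.asIdeal)
    (e : K) (y : L) :
    Even (log (w₁.valuation L (algebraMap K L e * y ^ 2)) -
      log (w₂.valuation L (algebraMap K L e * y ^ 2))) := by
  rcases eq_or_ne e 0 with rfl | he0
  · simp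
  rcases eq_or_ne y 0 with rfl | hy0
  · simp
  have hlog : ∀ w : HeightOneSpectrum B, w.asIdeal.LiesOver v.asIdeal →
      log (w.valuation L (algebraMap K L e * y ^ 2)) =
        v.asIdeal.ramificationIdx' w.asIdeal • log (v.valuation K e) +
          2 * log (w.valuation L y) := by
    intro w _
    rw [map_mul, ← valuation_liesOver L v w, map_pow, log_mul (pow_ne_zero _ (by simpa))
      (pow_ne_zero _ (by simpa)), log_pow, log_pow, nsmul_eq_mul, nsmul_eq_mul, Nat.cast_ofNat]
  rw [hlog w₁ inferInstance, hlog w₂ inferInstance, he]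
  exact ⟨log (w₁.valuation L y) - log (w₂.valuation L y), by ring⟩

end IsDedekindDomain.HeightOneSpectrum

namespace Polynomial

theorem separable_map_of_map_resultant_derivative_ne_zero {R k : Type*} [CommRing R] [Field k]
    (φ : R →+* k) {F : R[X]} (hF : F.natDegree ≠ 0)
    (hr : φ (F.resultant (derivative F)) ≠ 0) : (F.map φ).Separable := by
  obtain ⟨A, B, -, -, h⟩ :=
    exists_mul_add_mul_eq_C_resultant F (derivative F) le_rfl le_rfl (Or.inl hF)
  refine ⟨C (φ (F.resultant (derivative F)))⁻¹ * A.map φ,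
    C (φ (F.resultant (derivative F)))⁻¹ * B.map φ, ?_⟩
  have h' := congrArg (Polynomial.map φ) h
  simp only [Polynomial.map_add, Polynomial.map_mul, Polynomial.map_C] at h'
  rw [derivative_map, mul_assoc, mul_assoc, ← mul_add, mul_comm (A.map φ), mul_comm (B.map φ), h',
    ← C_mul, inv_mul_cancel₀ hr, C_1]

theorem resultant_derivative_ne_zero {R K : Type*} [CommRing R] [IsDomain R] [Field K]
    {φ : R →+* K} (hφ : Function.Injective φ) {F : R[X]} (hF : (F.map φ).Separable) :
    F.resultant (derivative F) ≠ 0 := by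
  have hmap : φ (F.resultant (derivative F)) =
      (F.map φ).resultant (derivative (F.map φ)) := by
    rw [← resultant_map_map, derivative_map, natDegree_map_eq_of_injective hφ,
      natDegree_map_eq_of_injective hφ]
  intro h0
  rw [h0, map_zero] at hmap
  exact resultant_ne_zero _ _ hF hmap.symm

theorem one_lt_card_normalizedFactors_of_isRoot {k : Type*} [Field k] [DecidableEq k]
    {f : k[X]} (hf : 1 < f.natDegree) {a : k} (ha : f.IsRoot a) :
    1 < Multiset.card (normalizedFactors f) := by
  obtain ⟨g, rfl⟩ := dvd_iff_isRoot.mpr ha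
  have hg0 : g ≠ 0 := by rintro rfl; simp at hf
  have hg : ¬IsUnit g := fun hu => by
    rw [natDegree_mul (X_sub_C_ne_zero a) hg0, natDegree_eq_zero_of_isUnit hu] at hf
    simp at hf
  rw [normalizedFactors_mul (X_sub_C_ne_zero a) hg0, Multiset.card_add,
    normalizedFactors_irreducible (irreducible_X_sub_C a), Multiset.card_singleton]
  have := (normalizedFactors_pos g hg0).mpr hg
  have := Multiset.card_pos.mpr this.ne'
  omega

end Polynomial

namespace Ideal

variable {R S : Type*} [CommRing R] [CommRing S] [Algebra R S] [IsDedekindDomain S]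

theorem ramificationIdx'_eq_one_of_nodup {p : Ideal R} {P : Ideal S}
    (hp : p.map (algebraMap R S) ≠ ⊥)
    (h : (normalizedFactors (p.map (algebraMap R S))).Nodup)
    (hP : P ∈ normalizedFactors (p.map (algebraMap R S))) : p.ramificationIdx' P = 1 := by
  have hPprime := prime_of_normalized_factor P hP
  rw [IsDedekindDomain.ramificationIdx'_eq_normalizedFactors_count hp
    (isPrime_of_prime hPprime) hPprime.ne_zero, Multiset.count_eq_one_of_mem h hP]

end Ideal

namespace KummerDedekind

variable {R S : Type*} [CommRing R] [CommRing S] [Algebra R S] {x : S} {I : Ideal R}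
  [IsDomain R] [IsIntegrallyClosed R] [IsDedekindDomain S] [Module.IsTorsionFree R S]

attribute [local instance] Ideal.Quotient.field

open scoped Classical in
theorem card_normalizedFactors_map_eq (hI : I.IsMaximal) (hI' : I ≠ ⊥)
    (hx : (conductor R x).comap (algebraMap R S) ⊔ I = ⊤) (hx' : IsIntegral R x) :
    Multiset.card (normalizedFactors (I.map (algebraMap R S))) =
      Multiset.card (normalizedFactors ((minpoly R x).map (Ideal.Quotient.mk I))) := by
  rw [normalizedFactors_ideal_map_eq_normalizedFactors_min_poly_mk_map hI hI' hx hx',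
    Multiset.card_map, Multiset.card_attach]

open scoped Classical in
theorem nodup_normalizedFactors_map (hI : I.IsMaximal) (hI' : I ≠ ⊥)
    (hx : (conductor R x).comap (algebraMap R S) ⊔ I = ⊤) (hx' : IsIntegral R x)
    (h : (normalizedFactors ((minpoly R x).map (Ideal.Quotient.mk I))).Nodup) :
    (normalizedFactors (I.map (algebraMap R S))).Nodup := by
  rw [normalizedFactors_ideal_map_eq_normalizedFactors_min_poly_mk_map hI hI' hx hx']
  exact (Multiset.nodup_attach.mpr h).map
    (Subtype.val_injective.comp (Equiv.injective _))

theorem exists_ne_liesOver_ramificationIdx'_eq_one (hI : I.IsMaximal) (hI' : I ≠ ⊥)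
    (hx : (conductor R x).comap (algebraMap R S) ⊔ I = ⊤) (hx' : IsIntegral R x)
    (hdeg : 1 < (minpoly R x).natDegree)
    (hr : (minpoly R x).resultant (derivative (minpoly R x)) ∉ I) {ρ : R}
    (hρ : (minpoly R x).eval ρ ∈ I) :
    ∃ w₁ w₂ : HeightOneSpectrum S, w₁ ≠ w₂ ∧ w₁.asIdeal.LiesOver I ∧
      w₂.asIdeal.LiesOver I ∧ I.ramificationIdx' w₁.asIdeal = 1 ∧
      I.ramificationIdx' w₂.asIdeal = 1 := by
  classical
  have hmonic := minpoly.monic hx'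
  have hsep : ((minpoly R x).map (Ideal.Quotient.mk I)).Separable :=
    separable_map_of_map_resultant_derivative_ne_zero _ (by omega)
      (by rwa [Ne, Ideal.Quotient.eq_zero_iff_mem])
  have hroot : ((minpoly R x).map (Ideal.Quotient.mk I)).IsRoot (Ideal.Quotient.mk I ρ) := by
    rwa [IsRoot, eval_map, eval₂_at_apply, Ideal.Quotient.eq_zero_iff_mem]
  have hcard := card_normalizedFactors_map_eq hI hI' hx hx' ▸
    one_lt_card_normalizedFactors_of_isRoot (by rwa [hmonic.natDegree_map]) hroot
  have hnodup := nodup_normalizedFactors_map hI hI' hx hx'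
    ((squarefree_iff_nodup_normalizedFactors (hmonic.map _).ne_zero).mp hsep.squarefree)
  obtain ⟨P₁, hP₁, P₂, hP₂, hne⟩ := (Finset.one_lt_card (s := ⟨_, hnodup⟩)).mp hcard
  let w (P) (hP : P ∈ normalizedFactors (I.map (algebraMap R S))) : HeightOneSpectrum S :=
    ⟨P, isPrime_of_prime (prime_of_normalized_factor P hP),
      (prime_of_normalized_factor P hP).ne_zero⟩
  have hmap : I.map (algebraMap R S) ≠ ⊥ := map_ne_bot_of_ne_bot hI'
  exact ⟨w P₁ hP₁, w P₂ hP₂, fun h => hne (congrArg HeightOneSpectrum.asIdeal h),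
    ((mem_primesOver_iff_mem_normalizedFactors S hI').mpr hP₁).2,
    ((mem_primesOver_iff_mem_normalizedFactors S hI').mpr hP₂).2,
    ramificationIdx'_eq_one_of_nodup hmap hnodup hP₁,
    ramificationIdx'_eq_one_of_nodup hmap hnodup hP₂⟩

end KummerDedekind

theorem Polynomial.exists_eval_natCast_ne_zero {R : Type*} [CommRing R] [IsDomain R]
    [CharZero R] {P : R[X]} (hP : P ≠ 0) : ∃ k : ℕ, P.eval (k : R) ≠ 0 := by
  by_contra! h
  refine hP (P.eq_zero_of_infinite_isRoot ((Set.infinite_range_of_injective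
    Nat.cast_injective).mono ?_))
  rintro _ ⟨k, rfl⟩
  exact h k

namespace NumberField.RingOfIntegers

variable {E : Type*} [Field E] [NumberField E]

theorem exists_not_isUnit_eval_natCast {G : (𝓞 E)[X]} (hG : 0 < G.natDegree) :
    ∃ k : ℕ, ¬IsUnit (G.eval (k : 𝓞 E)) := by
  classical
  set H : ℂ[X] := ∏ τ : E →ₐ[ℚ] ℂ, G.map ((τ : E →+* ℂ).comp (algebraMap (𝓞 E) E)) with hH
  have hHeval : ∀ k : ℕ, H.eval (k : ℂ) =
      algebraMap ℚ ℂ (Algebra.norm ℚ (algebraMap (𝓞 E) E (G.eval (k : 𝓞 E)))) := by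
    intro k
    rw [Algebra.norm_eq_prod_embeddings ℚ ℂ, hH, eval_prod]
    refine Finset.prod_congr rfl fun τ _ => ?_
    rw [eval_map, eval₂_at_natCast]
    rfl
  have hinj (τ : E →ₐ[ℚ] ℂ) :
      Function.Injective ((τ : E →+* ℂ).comp (algebraMap (𝓞 E) E)) :=
    τ.injective.comp RingOfIntegers.coe_injective
  have hHdeg : 0 < H.natDegree := by
    rw [hH, natDegree_prod _ _ fun τ _ => (Polynomial.map_ne_zero_iff (hinj τ)).mpr
      (ne_zero_of_natDegree_gt hG)]
    refine lt_of_lt_of_le ?_ (Finset.single_le_sum (fun _ _ => Nat.zero_le _)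
      (Finset.mem_univ (IsAlgClosed.lift : E →ₐ[ℚ] ℂ)))
    rwa [natDegree_map_eq_of_injective (hinj _)]
  obtain ⟨k, hk⟩ := exists_eval_natCast_ne_zero (R := ℂ) (P := (H - C 1) * (H + C 1))
    (mul_ne_zero (ne_zero_of_natDegree_gt (by rwa [natDegree_sub_C]))
      (ne_zero_of_natDegree_gt (by rwa [natDegree_add_C])))
  refine ⟨k, fun hu => hk ?_⟩
  have hnorm := isUnit_iff_norm.mp hu
  rw [RingOfIntegers.coe_norm] at hnorm
  rw [eval_mul, eval_sub, eval_add, eval_C, hHeval]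
  rcases abs_eq (zero_le_one' ℚ) |>.mp hnorm with h | h <;> simp [h]

theorem exists_isMaximal_eval_mem {F : (𝓞 E)[X]} (hF : 0 < F.natDegree) (hF0 : F.coeff 0 ≠ 0)
    {W : 𝓞 E} (hW : W ≠ 0) : ∃ q : Ideal (𝓞 E), q.IsMaximal ∧ W ∉ q ∧ ∃ ρ, F.eval ρ ∈ q := by
  set c := F.coeff 0
  -- `G ≡ 1 mod W`, so a prime containing a value of `G` does not contain `W`
  set G : (𝓞 E)[X] := 1 + C W * X * F.divX.comp (C (c * W) * X) with hG
  have hcG : C c * G = F.comp (C (c * W) * X) := by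
    conv_rhs => rw [← divX_mul_X_add F]
    simp only [hG, add_comp, mul_comp, C_comp, X_comp, map_mul]
    ring
  have hGdeg : 0 < G.natDegree := by
    have := congrArg natDegree hcG
    rw [natDegree_C_mul hF0, natDegree_comp, natDegree_C_mul_X _ (mul_ne_zero hF0 hW), mul_one]
      at this
    rwa [this]
  obtain ⟨k, hk⟩ := exists_not_isUnit_eval_natCast hGdeg
  obtain ⟨q, hq, hGq⟩ := Ideal.exists_le_maximal _ (Ideal.span_singleton_ne_top hk)
  have hGq : G.eval (k : 𝓞 E) ∈ q := hGq (Ideal.mem_span_singleton_self _)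
  refine ⟨q, hq, fun hWq => hq.ne_top ((Ideal.eq_top_iff_one _).mpr ?_), c * W * k, ?_⟩
  · have : G.eval (k : 𝓞 E) - 1 ∈ q := by
      simp only [hG, eval_add, eval_one, eval_mul, eval_C, add_sub_cancel_left]
      exact Ideal.mul_mem_right _ _ (Ideal.mul_mem_right _ _ hWq)
    simpa using sub_mem hGq this
  · have := congrArg (eval (k : 𝓞 E)) hcG
    rw [eval_mul, eval_C, eval_comp, eval_mul, eval_C, eval_X] at this
    rw [← this]
    exact Ideal.mul_mem_left _ _ hGq

end NumberField.RingOfIntegers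

open scoped IntermediateField

namespace NumberField

variable (E K : Type*) [Field E] [NumberField E] [Field K] [NumberField K] [Algebra E K]

theorem exists_ringOfIntegers_adjoin_eq_top : ∃ x : 𝓞 K, E⟮(x : K)⟯ = ⊤ := by
  obtain ⟨θ, hθ⟩ := Field.exists_primitive_element E K
  obtain ⟨y, hy0, hy⟩ := exists_integral_multiples ℤ ℚ ({θ} : Finset K)
  refine ⟨⟨y • θ, hy θ (Finset.mem_singleton_self θ)⟩, eq_top_iff.mpr (hθ ▸ ?_)⟩
  rw [IntermediateField.adjoin_simple_le_iff]
  change θ ∈ E⟮y • θ⟯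
  convert (E⟮y • θ⟯).smul_mem (IntermediateField.mem_adjoin_simple_self E (y • θ))
    (x := (y : E)⁻¹) using 1
  rw [← Int.cast_smul_eq_zsmul E, smul_smul, inv_mul_cancel₀ (Int.cast_ne_zero.mpr hy0),
    one_smul]

variable {E K}

theorem exists_ne_zero_algebraMap_mem_conductor {x : 𝓞 K} (hx : E⟮(x : K)⟯ = ⊤) :
    ∃ d : 𝓞 E, d ≠ 0 ∧ algebraMap (𝓞 E) (𝓞 K) d ∈ conductor (𝓞 E) x := by
  have hint : IsIntegral E (x : K) := .of_finite E _
  let B := PowerBasis.ofAdjoinEqTop hint (by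
    rw [← IntermediateField.adjoin_simple_toSubalgebra_of_isAlgebraic hint.isAlgebraic, hx,
      IntermediateField.top_toSubalgebra])
  have hgen : B.gen = x := PowerBasis.ofAdjoinEqTop_gen _ _
  -- the discriminant of `E[x]` multiplies `𝓞 K` into `𝓞 E[x]`
  obtain ⟨d, hd⟩ := IsIntegrallyClosed.isIntegral_iff.mp
    (Algebra.discr_isIntegral E (R := 𝓞 E) (b := B.basis) fun i => by
      rw [PowerBasis.coe_basis, hgen]
      exact (Algebra.IsIntegral.isIntegral x).algebraMap.pow _)
  refine ⟨d, fun h => Algebra.discr_not_zero_of_basis E B.basis (by rw [← hd, h, map_zero]), ?_⟩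
  have hmem : algebraMap (𝓞 E) K d ∈ IsLocalization.coeSubmodule K (conductor (𝓞 E) x) := by
    refine mem_coeSubmodule_conductor.mpr fun z => ?_
    have := Algebra.discr_mul_isIntegral_mem_adjoin E (R := 𝓞 E) (B := B)
      (by rw [hgen]; exact (Algebra.IsIntegral.isIntegral x).algebraMap)
      (Algebra.IsIntegral.isIntegral z).algebraMap
    rwa [hgen, ← hd, Algebra.smul_def, ← IsScalarTower.algebraMap_apply] at this
  obtain ⟨d', hd', h⟩ := (IsLocalization.mem_coeSubmodule K _).mp hmem
  have : algebraMap (𝓞 E) (𝓞 K) d = d' := FaithfulSMul.algebraMap_injective (𝓞 K) K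
    (by rw [← IsScalarTower.algebraMap_apply, h])
  exact this ▸ hd'

theorem exists_ne_liesOver_ramificationIdx'_eq_one (hdeg : 1 < Module.finrank E K) :
    ∃ (v : HeightOneSpectrum (𝓞 E)) (w₁ w₂ : HeightOneSpectrum (𝓞 K)), w₁ ≠ w₂ ∧
      w₁.asIdeal.LiesOver v.asIdeal ∧ w₂.asIdeal.LiesOver v.asIdeal ∧
      v.asIdeal.ramificationIdx' w₁.asIdeal = 1 ∧ v.asIdeal.ramificationIdx' w₂.asIdeal = 1 ∧
      (2 : 𝓞 K) ∉ w₁.asIdeal := by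
  obtain ⟨x, hx⟩ := exists_ringOfIntegers_adjoin_eq_top E K
  have hint : IsIntegral (𝓞 E) x := Algebra.IsIntegral.isIntegral x
  set F := minpoly (𝓞 E) x
  have hFE : F.map (algebraMap (𝓞 E) E) = minpoly E (x : K) :=
    (minpoly.isIntegrallyClosed_eq_field_fractions E K hint).symm
  have hFdeg : F.natDegree = Module.finrank E K := by
    rw [← (minpoly.monic hint).natDegree_map (algebraMap (𝓞 E) E), hFE,
      ← IntermediateField.adjoin.finrank (.of_finite E _), hx, IntermediateField.finrank_top']
  have hx0 : (x : K) ≠ 0 := fun h0 => by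
    have := congrArg natDegree hFE
    rw [h0, minpoly.zero, natDegree_X, (minpoly.monic hint).natDegree_map, hFdeg] at this
    omega
  have hF0 : F.coeff 0 ≠ 0 := fun h =>
    minpoly.coeff_zero_ne_zero (.of_finite E _) hx0 (by rw [← hFE, coeff_map, h, map_zero])
  have hr : F.resultant (derivative F) ≠ 0 :=
    resultant_derivative_ne_zero RingOfIntegers.coe_injective
      (hFE ▸ Algebra.IsSeparable.isSeparable E (x : K))
  obtain ⟨d, hd0, hd⟩ := exists_ne_zero_algebraMap_mem_conductor hx
  obtain ⟨q, hq, hWq, ρ, hρ⟩ := RingOfIntegers.exists_isMaximal_eval_mem (by omega) hF0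
    (W := 2 * d * F.resultant (derivative F)) (mul_ne_zero (mul_ne_zero two_ne_zero hd0) hr)
  have hq0 : q ≠ ⊥ := Ring.ne_bot_of_isMaximal_of_not_isField hq (RingOfIntegers.not_isField E)
  have hcond : (conductor (𝓞 E) x).comap (algebraMap (𝓞 E) (𝓞 K)) ⊔ q = ⊤ := by
    by_contra h
    have hdq : d ∈ q := (hq.eq_of_le h le_sup_right) ▸ mem_sup_left hd
    exact hWq (mul_mem_right _ _ (mul_mem_left _ _ hdq))
  obtain ⟨w₁, w₂, hne, h₁, h₂, he₁, he₂⟩ :=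
    KummerDedekind.exists_ne_liesOver_ramificationIdx'_eq_one hq hq0 hcond hint
      (show 1 < F.natDegree by omega) (fun h => hWq (mul_mem_left _ _ h)) hρ
  refine ⟨⟨q, hq.isPrime, hq0⟩, w₁, w₂, hne, h₁, h₂, he₁, he₂, fun h2 => hWq ?_⟩
  have : (2 : 𝓞 E) ∈ q := by
    rw [h₁.over]
    exact mem_comap.mpr (by rwa [map_ofNat])
  exact mul_mem_right _ _ (mul_mem_right _ _ this)

end NumberField

/-- If `K/E` is a proper finite extension of number fields, then the sums of
squares of `K` are not all contained in `E·K²`. -/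
theorem stmt_7 (E K : Type) [Field E] [NumberField E] [Field K] [NumberField K]
    [Algebra E K] (hdeg : 1 < Module.finrank E K) :
    ∃ σ : K, IsSumSq σ ∧ ∀ (e : E) (x : K), σ ≠ algebraMap E K e * x ^ 2 := by
  obtain ⟨v, w₁, w₂, hne, h₁, h₂, he₁, he₂, h2⟩ :=
    exists_ne_liesOver_ramificationIdx'_eq_one hdeg
  obtain ⟨a, b, hv₁, hv₂⟩ := exists_intValuation_sq_add_sq_add_one hne h2
  refine ⟨algebraMap (𝓞 K) K (a ^ 2 + b ^ 2 + 1), ?_, fun e y h => ?_⟩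
  · rw [map_add, map_add, map_pow, map_pow, map_one]
    exact ((IsSquare.sq _).isSumSq.add (IsSquare.sq _).isSumSq).add .one
  · have := even_log_valuation_sub_log_valuation K v w₁ w₂ (he₁.trans he₂.symm) e y
    rw [← h, valuation_of_algebraMap, valuation_of_algebraMap, hv₁, hv₂] at this
    norm_num at this
end

section
/- Let L/K be a finite purely inseparable extension of fields of odd characteristic p. Then the pythagorean closure L_pyth equals the compositum K_pyth·L, and L_pyth/K_pyth is a finite purely inseparable extension. -/
/-!
Frobenius is additive, so in a purely inseparable extension `E / F` of exponential
characteristic `p` every sum of squares `a` of `E` has a power `a ^ p ^ n` that is a sum of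
squares of `F`. If `F` is pythagorean this power is a square `d ^ 2`, and for odd `p`
the exponent `p ^ n = 2 * m + 1` is odd, so `a = (d / a ^ m) ^ 2`: purely inseparable
extensions of pythagorean fields of odd characteristic are pythagorean.

The compositum `K_pyth ⊔ L` is finite and purely inseparable over `K_pyth`, hence
pythagorean, so it contains `L_pyth`; conversely `L_pyth` is pythagorean, so it contains
`K_pyth` and `L`.
-/

/-- A field is pythagorean if every sum of squares is a square. -/
def Pythagorean (K : Type) [Field K] : Prop := ∀ a : K, IsSumSq a → IsSquare a

theorem IsSumSq.pow {R : Type*} [CommSemiring R] {a : R} (ha : IsSumSq a) (n : ℕ) :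
    IsSumSq (a ^ n) := by
  simpa using pow_mem (Subsemiring.mem_sumSq.mpr ha) n

theorem IsSquare.of_pow_odd {K : Type*} [Field K] {a : K} {k : ℕ} (hk : Odd k)
    (h : IsSquare (a ^ k)) : IsSquare a := by
  rcases eq_or_ne a 0 with rfl | ha
  · exact ⟨0, by simp⟩
  obtain ⟨m, rfl⟩ := hk
  obtain ⟨d, hd⟩ := h
  refine ⟨d / a ^ m, ?_⟩
  rw [div_mul_div_comm, ← hd, eq_div_iff (by positivity)]
  ring

section PurelyInseparable

variable {F E : Type*} [Field F] [Field E] [Algebra F E] (p : ℕ) [ExpChar F p]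
  [IsPurelyInseparable F E]

theorem IsSumSq.exists_algebraMap_eq_pow_expChar_pow {a : E} (ha : IsSumSq a) :
    ∃ n : ℕ, ∃ c : F, IsSumSq c ∧ algebraMap F E c = a ^ p ^ n := by
  have : ExpChar E p := expChar_of_injective_algebraMap (algebraMap F E).injective p
  induction ha with
  | zero => exact ⟨0, 0, .zero, by simp⟩
  | sq_add x _ ih =>
    obtain ⟨n, c, hc, hcs⟩ := ih
    obtain ⟨m, y, hyx⟩ := IsPurelyInseparable.pow_mem F p x
    refine ⟨m + n, y ^ p ^ n * y ^ p ^ n + c ^ p ^ m, .sq_add _ (hc.pow _), ?_⟩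
    rw [add_pow_expChar_pow, mul_pow, map_add, map_mul, map_pow, map_pow, hyx, hcs]
    ring

end PurelyInseparable

theorem Pythagorean.of_isPurelyInseparable {F E : Type} [Field F] [Field E] [Algebra F E]
    [IsPurelyInseparable F E] (p : ℕ) [ExpChar F p] (hp : p ≠ 2) (hF : Pythagorean F) :
    Pythagorean E := by
  intro a ha
  obtain ⟨n, c, hc, hca⟩ := ha.exists_algebraMap_eq_pow_expChar_pow (F := F) p
  have hodd : Odd (p ^ n) := by
    rcases expChar_is_prime_or_one F p with hprime | rfl
    · exact (hprime.odd_of_ne_two hp).pow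
    · simp
  obtain ⟨d, rfl⟩ := hF c hc
  exact .of_pow_odd hodd ⟨algebraMap F E d, by rw [← hca, map_mul]⟩

namespace IntermediateField

variable {K Ω : Type*} [Field K] [Field Ω] [Algebra K Ω]

theorem extendScalars_sup_eq_adjoin (K' F : IntermediateField K Ω) :
    extendScalars (le_sup_left : K' ≤ K' ⊔ F) = adjoin K' (F : Set Ω) :=
  restrictScalars_injective K <| by
    rw [extendScalars_restrictScalars, restrictScalars_adjoin_eq_sup, adjoin_self]

instance finiteDimensional_extendScalars_sup (K' F : IntermediateField K Ω)
    [FiniteDimensional K F] :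
    FiniteDimensional K' (extendScalars (le_sup_left : K' ≤ K' ⊔ F)) := by
  rw [extendScalars_sup_eq_adjoin, FiniteDimensional, ← Module.rank_lt_aleph0_iff]
  exact (adjoin_rank_le_of_isAlgebraic_right K' F).trans_lt (Module.rank_lt_aleph0_iff.mpr ‹_›)

instance isPurelyInseparable_extendScalars_sup (K' F : IntermediateField K Ω)
    [IsPurelyInseparable K F] :
    IsPurelyInseparable K' (extendScalars (le_sup_left : K' ≤ K' ⊔ F)) := by
  rw [extendScalars_sup_eq_adjoin,
    isPurelyInseparable_adjoin_iff_pow_mem (F := K') (E := Ω) (q := ringExpChar K)]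
  intro x hx
  obtain ⟨n, c, hc⟩ := IsPurelyInseparable.pow_mem K (ringExpChar K) (⟨x, hx⟩ : F)
  exact ⟨n, algebraMap K K' c, by
    simpa [← IsScalarTower.algebraMap_apply] using congrArg Subtype.val hc⟩

end IntermediateField

theorem stmt_19_general (K L Ω : Type) [Field K] [Field L] [Field Ω]
    [Algebra K L] [Algebra L Ω] [Algebra K Ω] [IsScalarTower K L Ω]
    [FiniteDimensional K L] [IsPurelyInseparable K L]
    (p : ℕ) (hp : p.Prime) (hodd : p ≠ 2) [CharP K p]
    (Kpyth : IntermediateField K Ω) (hKp : Pythagorean Kpyth)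
    (hKmin : ∀ Q : IntermediateField K Ω, Pythagorean Q → Kpyth ≤ Q)
    (Lpyth : IntermediateField K Ω)
    (hLle : (IsScalarTower.toAlgHom K L Ω).fieldRange ≤ Lpyth)
    (hLp : Pythagorean Lpyth)
    (hLmin : ∀ Q : IntermediateField K Ω,
      (IsScalarTower.toAlgHom K L Ω).fieldRange ≤ Q → Pythagorean Q → Lpyth ≤ Q) :
    Lpyth = Kpyth ⊔ (IsScalarTower.toAlgHom K L Ω).fieldRange ∧
    ∃ h : Kpyth ≤ Lpyth,
      FiniteDimensional Kpyth (IntermediateField.extendScalars h) ∧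
      IsPurelyInseparable Kpyth (IntermediateField.extendScalars h) := by
  have : Fact p.Prime := ⟨hp⟩
  set F := (IsScalarTower.toAlgHom K L Ω).fieldRange
  let e : L ≃ₐ[K] F := AlgEquiv.ofInjectiveField _
  have : FiniteDimensional K F := e.toLinearEquiv.finiteDimensional
  have : IsPurelyInseparable K F := e.isPurelyInseparable
  have hsup : Pythagorean ↥(Kpyth ⊔ F) :=
    hKp.of_isPurelyInseparable p hodd
      (E := IntermediateField.extendScalars (le_sup_left : Kpyth ≤ Kpyth ⊔ F))
  obtain rfl : Lpyth = Kpyth ⊔ F :=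
    le_antisymm (hLmin _ le_sup_right hsup) (sup_le (hKmin _ hLp) hLle)
  exact ⟨rfl, le_sup_left, inferInstance, inferInstance⟩

/-- Let `L/K` be a finite purely inseparable extension of fields of odd
characteristic `p`, embedded in an algebraic closure `Ω` of `L`.  Then the pythagorean
closure of `L` (minimal pythagorean intermediate field containing the image of `L`) equals
the compositum `K_pyth·L`, and `L_pyth/K_pyth` is finite and purely inseparable. -/
theorem stmt_19 (K L Ω : Type) [Field K] [Field L] [Field Ω]
    [Algebra K L] [Algebra L Ω] [Algebra K Ω] [IsScalarTower K L Ω]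
    [IsAlgClosure L Ω] [FiniteDimensional K L] [IsPurelyInseparable K L]
    (p : ℕ) (hp : p.Prime) (hodd : p ≠ 2) [CharP K p]
    (Kpyth : IntermediateField K Ω) (hKp : Pythagorean Kpyth)
    (hKmin : ∀ Q : IntermediateField K Ω, Pythagorean Q → Kpyth ≤ Q)
    (Lpyth : IntermediateField K Ω)
    (hLle : (IsScalarTower.toAlgHom K L Ω).fieldRange ≤ Lpyth)
    (hLp : Pythagorean Lpyth)
    (hLmin : ∀ Q : IntermediateField K Ω,
      (IsScalarTower.toAlgHom K L Ω).fieldRange ≤ Q → Pythagorean Q → Lpyth ≤ Q) :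
    Lpyth = Kpyth ⊔ (IsScalarTower.toAlgHom K L Ω).fieldRange ∧
    ∃ h : Kpyth ≤ Lpyth,
      FiniteDimensional Kpyth (IntermediateField.extendScalars h) ∧
      IsPurelyInseparable Kpyth (IntermediateField.extendScalars h) :=
  stmt_19_general K L Ω p hp hodd Kpyth hKp hKmin Lpyth hLle hLp hLmin
end
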